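/- If P is M-bounded and its support contains more than k points, then p_min ≥ (R*_{k−1} − R*_k) / (4M²), where R*_j denotes the minimal distortion achievable by codebooks of j points and p_min = inf_{c* ∈ M, i} P(V_i(c*)). -/

import Mathlib

open MeasureTheory Metric

noncomputable section

variable {H : Type*} [NormedAddCommGroup H] [InnerProductSpace ℝ H] [MeasurableSpace H]

/-- `qgamma k c x = min_j ‖x - c j‖²`. -/
def qgamma (k : ℕ) (c : Fin k → H) (x : H) : ℝ := ⨅ j : Fin k, ‖x - c j‖ ^ 2

/-- distortion (risk) of a codebook. -/
def qrisk (k : ℕ) (P : Measure H) (c : Fin k → H) : ℝ := ∫ x, qgamma k c x ∂P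

/-- the set of optimal codebooks. -/
def qopt (k : ℕ) (P : Measure H) : Set (Fin k → H) :=
  {c | ∀ c' : Fin k → H, qrisk k P c ≤ qrisk k P c'}

/-- the `i`-th (closed) Voronoi cell of the codebook `c`. -/
def vcell (k : ℕ) (c : Fin k → H) (i : Fin k) : Set H :=
  {x | ∀ j : Fin k, ‖x - c i‖ ≤ ‖x - c j‖}

/-- `B`, the minimal separation between code points of optimal codebooks. -/
def qB (k : ℕ) (P : Measure H) : ℝ :=
  sInf {b | ∃ c ∈ qopt k P, ∃ i j : Fin k, i ≠ j ∧ b = ‖c i - c j‖}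

/-- `p_min`, the minimal mass of a Voronoi cell of an optimal codebook. -/
def qpmin (k : ℕ) (P : Measure H) : ℝ :=
  sInf {p | ∃ c ∈ qopt k P, ∃ i : Fin k, p = (P (vcell k c i)).toReal}

/-- `N_{c*}`, the union of the boundaries between Voronoi cells. -/
def nbd (k : ℕ) (c : Fin k → H) : Set H :=
  ⋃ (i : Fin k) (j : Fin k) (_ : i ≠ j), vcell k c i ∩ vcell k c j

/-- the weight function `p(t)`, the maximal mass of the closed `t`-neighborhood
of `N_{c*}` over optimal codebooks `c*`. -/
def pweight (k : ℕ) (P : Measure H) (t : ℝ) : ℝ :=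
  sSup {p | ∃ c ∈ qopt k P, p = (P (cthickening t (nbd k c))).toReal}

/-- `P` is `M`-bounded: its support is contained in the closed ball `B(0,M)`. -/
def mbounded (P : Measure H) (M : ℝ) : Prop := P (closedBall (0 : H) M)ᶜ = 0

/-- the support of `P` contains more than `k` points. -/
def suppGT (P : Measure H) (k : ℕ) : Prop :=
  ∀ S : Finset H, S.card ≤ k → P ((S : Set H)ᶜ) ≠ 0

/-- the margin condition with radius `r0`. -/
def margin (k : ℕ) (P : Measure H) (M r0 : ℝ) : Prop :=
  0 < r0 ∧ mbounded P M ∧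
    ∀ t : ℝ, 0 ≤ t → t ≤ r0 → pweight k P t ≤ qB k P * qpmin k P * t / (128 * M ^ 2)

/-- `R*_j`, the minimal distortion achievable by codebooks of `j` points. -/
def qriskStar (j : ℕ) (P : Measure H) : ℝ :=
  sInf {v | ∃ c : Fin j → H, v = qrisk j P c}

/-! Delete a cell `V_i` from an optimal `k`-codebook `c*` and project the remaining `k - 1`
points onto the ball `B(0,M)`. The metric projection onto a closed convex set is nonexpansive
towards points of that set, so outside `V_i` every point of the support keeps a code point at
least as close as before, while inside `V_i` every point lies within `2M` of any projected
code point. Hence `R*_{k-1} ≤ R*_k + 4M² P(V_i)`. -/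

theorem exists_mem_forall_norm_sub_le_of_complete_convex {F : Type*} [NormedAddCommGroup F]
    [InnerProductSpace ℝ F] {K : Set F} (hne : K.Nonempty) (hcomplete : IsComplete K)
    (hconvex : Convex ℝ K) (y : F) : ∃ v ∈ K, ∀ x ∈ K, ‖x - v‖ ≤ ‖x - y‖ := by
  obtain ⟨v, hv, hmin⟩ := exists_norm_eq_iInf_of_complete_convex hne hcomplete hconvex y
  have hobtuse := (norm_eq_iInf_iff_real_inner_le_zero hconvex hv).1 hmin
  refine ⟨v, hv, fun x hx => le_of_pow_le_pow_left₀ two_ne_zero (norm_nonneg _) ?_⟩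
  have hsplit : x - y = (x - v) - (y - v) := by abel
  rw [hsplit, norm_sub_sq_real (x - v), real_inner_comm]
  nlinarith [hobtuse x hx, norm_nonneg (y - v)]

section Quantization

variable {E : Type*} [NormedAddCommGroup E] {k : ℕ} {c d : Fin k → E} {x : E} {M : ℝ}

theorem qgamma_nonneg (c : Fin k → E) (x : E) : 0 ≤ qgamma k c x :=
  Real.iInf_nonneg fun _ => by positivity

theorem qgamma_le (c : Fin k → E) (x : E) (j : Fin k) : qgamma k c x ≤ ‖x - c j‖ ^ 2 :=
  ciInf_le ⟨0, by rintro _ ⟨j, rfl⟩; positivity⟩ j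

theorem le_qgamma [Nonempty (Fin k)] {a : ℝ} (h : ∀ j, a ≤ ‖x - c j‖ ^ 2) :
    a ≤ qgamma k c x :=
  le_ciInf h

theorem qgamma_mono [Nonempty (Fin k)] (h : ∀ j, ‖x - d j‖ ≤ ‖x - c j‖) :
    qgamma k d x ≤ qgamma k c x :=
  le_qgamma fun j => (qgamma_le d x j).trans (pow_le_pow_left₀ (norm_nonneg _) (h j) 2)

theorem qgamma_le_four_mul_sq (j : Fin k) (hx : ‖x‖ ≤ M) (hj : ‖c j‖ ≤ M) :
    qgamma k c x ≤ 4 * M ^ 2 :=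
  calc qgamma k c x ≤ ‖x - c j‖ ^ 2 := qgamma_le c x j
    _ ≤ (M + M) ^ 2 :=
      pow_le_pow_left₀ (norm_nonneg _) ((norm_sub_le _ _).trans (add_le_add hx hj)) 2
    _ = 4 * M ^ 2 := by ring

theorem qgamma_succAbove_le_of_notMem_vcell {c : Fin (k + 1) → E} {i : Fin (k + 1)}
    (hx : x ∉ vcell (k + 1) c i) : qgamma k (c ∘ i.succAbove) x ≤ qgamma (k + 1) c x := by
  obtain ⟨j₀, hcloser⟩ : ∃ j₀, ‖x - c j₀‖ < ‖x - c i‖ := by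
    simpa [vcell] using hx
  have hj₀ : j₀ ≠ i := by rintro rfl; exact lt_irrefl _ hcloser
  obtain ⟨l₀, rfl⟩ := Fin.exists_succAbove_eq hj₀
  refine le_qgamma fun j => ?_
  rcases eq_or_ne j i with rfl | hj
  · exact (qgamma_le _ x l₀).trans (pow_le_pow_left₀ (norm_nonneg _) hcloser.le 2)
  · obtain ⟨l, rfl⟩ := Fin.exists_succAbove_eq hj
    exact qgamma_le _ x l

theorem isClosed_vcell (c : Fin k → E) (i : Fin k) : IsClosed (vcell k c i) := by
  simp only [vcell, Set.ofPred_forall]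
  exact isClosed_iInter fun j => isClosed_le (by fun_prop) (by fun_prop)

theorem qgamma_le_qgamma_add_indicator_vcell [Nonempty (Fin k)] {c : Fin (k + 1) → E}
    {i : Fin (k + 1)} (hx : ‖x‖ ≤ M) (hd_norm : ∀ j, ‖d j‖ ≤ M)
    (hd : ∀ j, ‖x - d j‖ ≤ ‖x - c (i.succAbove j)‖) :
    qgamma k d x ≤ qgamma (k + 1) c x + (vcell (k + 1) c i).indicator (fun _ => 4 * M ^ 2) x := by
  by_cases hxV : x ∈ vcell (k + 1) c i
  · rw [Set.indicator_of_mem hxV]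
    obtain ⟨j⟩ := ‹Nonempty (Fin k)›
    linarith [qgamma_le_four_mul_sq j hx (hd_norm j), qgamma_nonneg c x]
  · rw [Set.indicator_of_notMem hxV, add_zero]
    exact (qgamma_mono hd).trans (qgamma_succAbove_le_of_notMem_vcell hxV)

variable [MeasurableSpace E] {P : Measure E}

theorem mbounded.ae_norm_le (hbd : mbounded P M) : ∀ᵐ x ∂P, ‖x‖ ≤ M := by
  rw [ae_iff]
  simpa [mbounded, Set.compl_def] using hbd

theorem qriskStar_le_qrisk (P : Measure E) (c : Fin k → E) : qriskStar k P ≤ qrisk k P c :=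
  csInf_le ⟨0, by rintro _ ⟨c', rfl⟩; exact integral_nonneg (qgamma_nonneg c')⟩ ⟨c, rfl⟩

theorem qriskStar_eq_qrisk_of_mem_qopt (hc : c ∈ qopt k P) : qriskStar k P = qrisk k P c :=
  (qriskStar_le_qrisk P c).antisymm (le_csInf ⟨_, c, rfl⟩ fun _ ⟨c', hc'⟩ => hc'.symm ▸ hc c')

variable [OpensMeasurableSpace E]

theorem measurable_qgamma (c : Fin k → E) : Measurable (qgamma k c) :=
  Measurable.iInf fun j => (by fun_prop : Continuous fun x => ‖x - c j‖ ^ 2).measurable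

theorem integrable_qgamma [IsFiniteMeasure P] (hbd : mbounded P M) (j : Fin k) :
    Integrable (qgamma k c) P := by
  refine (integrable_const ((M + ‖c j‖) ^ 2)).mono' (measurable_qgamma c).aestronglyMeasurable ?_
  filter_upwards [hbd.ae_norm_le] with x hx
  rw [Real.norm_of_nonneg (qgamma_nonneg c x)]
  exact (qgamma_le c x j).trans
    (pow_le_pow_left₀ (norm_nonneg _) ((norm_sub_le _ _).trans (by linarith)) 2)

theorem qrisk_le_qrisk_add_measure_vcell [Nonempty (Fin k)] [IsFiniteMeasure P]
    (hbd : mbounded P M) {c : Fin (k + 1) → E} (i : Fin (k + 1)) (hd_norm : ∀ j, ‖d j‖ ≤ M)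
    (hd : ∀ j, ∀ x, ‖x‖ ≤ M → ‖x - d j‖ ≤ ‖x - c (i.succAbove j)‖) :
    qrisk k P d ≤ qrisk (k + 1) P c + (P (vcell (k + 1) c i)).toReal * (4 * M ^ 2) := by
  have hV := (isClosed_vcell c i).measurableSet
  have hint_c := integrable_qgamma (c := c) hbd i
  have hint_V := (integrable_const (4 * M ^ 2 : ℝ)).indicator (μ := P) hV
  have hmono : qrisk k P d ≤ ∫ x, (qgamma (k + 1) c x +
      (vcell (k + 1) c i).indicator (fun _ => 4 * M ^ 2) x) ∂P := by
    refine integral_mono_ae (integrable_qgamma hbd (Classical.arbitrary _)) (hint_c.add hint_V) ?_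
    filter_upwards [hbd.ae_norm_le] with x hx
    exact qgamma_le_qgamma_add_indicator_vcell hx hd_norm (fun j => hd j x hx)
  rwa [integral_add hint_c hint_V, integral_indicator_const _ hV, smul_eq_mul,
    measureReal_def] at hmono

theorem qriskStar_sub_qriskStar_succ_le [InnerProductSpace ℝ E] [CompleteSpace E]
    [Nonempty (Fin k)] [IsFiniteMeasure P]
    (hM : 0 ≤ M) (hbd : mbounded P M) {c : Fin (k + 1) → E} (hc : c ∈ qopt (k + 1) P)
    (i : Fin (k + 1)) :
    qriskStar k P - qriskStar (k + 1) P ≤ (P (vcell (k + 1) c i)).toReal * (4 * M ^ 2) := by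
  choose proj hproj_mem hproj_le using exists_mem_forall_norm_sub_le_of_complete_convex
    ⟨0, mem_closedBall_self hM⟩ isClosed_closedBall.isComplete (convex_closedBall (0 : E) M)
  have hd_norm (j : Fin k) : ‖proj (c (i.succAbove j))‖ ≤ M := by
    simpa using hproj_mem (c (i.succAbove j))
  have hd (j : Fin k) (x : E) (hx : ‖x‖ ≤ M) :
      ‖x - proj (c (i.succAbove j))‖ ≤ ‖x - c (i.succAbove j)‖ :=
    hproj_le _ x (by simpa using hx)
  have hrisk := qrisk_le_qrisk_add_measure_vcell hbd i hd_norm hd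
  linarith [qriskStar_le_qrisk P (fun j => proj (c (i.succAbove j))),
    qriskStar_eq_qrisk_of_mem_qopt hc]

end Quantization

theorem stmt18_general [BorelSpace H] [CompleteSpace H]
    (k : ℕ) (hk : 2 ≤ k) (P : Measure H) [IsProbabilityMeasure P]
    (M : ℝ) (hM : 0 < M) (hbd : mbounded P M)
    (hne : (qopt k P).Nonempty) :
    (qriskStar (k - 1) P - qriskStar k P) / (4 * M ^ 2) ≤ qpmin k P := by
  obtain ⟨m, rfl⟩ : ∃ m, k = m + 1 := ⟨k - 1, by omega⟩
  have : Nonempty (Fin m) := ⟨⟨0, by omega⟩⟩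
  obtain ⟨c₀, hc₀⟩ := hne
  refine le_csInf ⟨_, c₀, hc₀, 0, rfl⟩ ?_
  rintro _ ⟨c, hc, i, rfl⟩
  rw [Nat.add_sub_cancel, div_le_iff₀ (by positivity)]
  exact qriskStar_sub_qriskStar_succ_le hM.le hbd hc i

/-- From the proof of Proposition 2.1: `p_min ≥ (R*_{k−1} − R*_k)/(4M²)`. -/
theorem stmt18 [BorelSpace H] [SecondCountableTopology H] [CompleteSpace H]
    (k : ℕ) (hk : 2 ≤ k) (P : Measure H) [IsProbabilityMeasure P]
    (M : ℝ) (hM : 0 < M) (hbd : mbounded P M) (hsupp : suppGT P k)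
    (hne : (qopt k P).Nonempty) :
    (qriskStar (k - 1) P - qriskStar k P) / (4 * M ^ 2) ≤ qpmin k P :=
  stmt18_general k hk P M hM hbd hne

end
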